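/- arXiv:1210.0375 — 3 statements merged into one kernel-verified Lean document; each statement's English description precedes it below -/
import Mathlib

section
/- Let x_1, ..., x_M be points in ℝ^N and let T be an M×M matrix with nonnegative entries t_ij such that for every j, Σ_{i=1}^M t_ij = 1/M. Suppose the set S = {(x_j, x_i) ∈ ℝ^N × ℝ^N : t_ij > 0} is cyclically monotone. Define x̄_j = Σ_{i=1}^M (M t_ij) x_i for j = 1, ..., M (a convex combination of the x_i, since the coefficients M t_ij are nonnegative and sum to 1 over i). Then the set Ŝ = {(x_j, x̄_j) : j = 1, ..., M} is cyclically monotone. -/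
open Finset

/-- A set `S ⊆ ℝ^N × ℝ^N` is cyclically monotone if for every `k ≥ 1` and every
sequence of pairs `(f 0, a 0), ..., (f k, a k)` in `S` (indexed cyclically),
`∑ l, ⟪a l, f (l+1) - f l⟫ ≤ 0`. -/
def CyclicallyMonotone {N : ℕ}
    (S : Set (EuclideanSpace ℝ (Fin N) × EuclideanSpace ℝ (Fin N))) : Prop :=
  ∀ (k : ℕ) (f a : Fin (k + 1) → EuclideanSpace ℝ (Fin N)),
    (∀ l, (f l, a l) ∈ S) →
    ∑ l, (inner ℝ (a l) (f (l + 1) - f l) : ℝ) ≤ 0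

/-!
Choosing, independently for each step `l` of a cycle through the points `x (j l)`, a partner `i`
with probability `M * t i (j l)` expresses the cyclic sum for the barycentres `xbar (j l)` as the
expectation of the cyclic sums for the chosen pairs `(x (j l), x i)`. Every choice of positive
probability lies in `S`, so each of these sums is nonpositive, and so is their expectation.
-/

section ProductWeights

variable {κ ι R : Type*} [Fintype κ] [DecidableEq κ] [Fintype ι] [CommSemiring R]

theorem sum_pi_prod_mul_eval (w : κ → ι → R) (hw : ∀ l, ∑ i, w l i = 1) (m : κ) (c : ι → R) :
    ∑ g : κ → ι, (∏ l, w l (g l)) * c (g m) = ∑ i, w m i * c i := by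
  calc ∑ g : κ → ι, (∏ l, w l (g l)) * c (g m)
      = ∑ g : κ → ι, ∏ l, w l (g l) * (if l = m then c (g l) else 1) := by
        refine sum_congr rfl fun g _ => ?_
        rw [prod_mul_distrib, prod_ite_eq' univ m, if_pos (mem_univ m)]
    _ = ∏ l, ∑ i, w l i * (if l = m then c i else 1) :=
        (Fintype.prod_sum fun l i => w l i * if l = m then c i else 1).symm
    _ = ∑ i, w m i * c i := by
        rw [Fintype.prod_eq_single m fun l hl => by simp [hl, hw]]
        simp

theorem sum_sum_mul_eq_sum_pi_prod_mul_sum (w c : κ → ι → R) (hw : ∀ l, ∑ i, w l i = 1) :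
    ∑ l, ∑ i, w l i * c l i = ∑ g : κ → ι, (∏ l, w l (g l)) * ∑ l, c l (g l) := by
  symm
  simp_rw [mul_sum]
  rw [sum_comm]
  exact sum_congr rfl fun l _ => sum_pi_prod_mul_eval w hw l (c l)

end ProductWeights

theorem CyclicallyMonotone.sum_inner_convex_combination_nonpos {N k : ℕ} {ι : Type*} [Fintype ι]
    {S : Set (EuclideanSpace ℝ (Fin N) × EuclideanSpace ℝ (Fin N))} (hS : CyclicallyMonotone S)
    (f : Fin (k + 1) → EuclideanSpace ℝ (Fin N)) (b : Fin (k + 1) → ι → EuclideanSpace ℝ (Fin N))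
    (w : Fin (k + 1) → ι → ℝ) (hw_nonneg : ∀ l i, 0 ≤ w l i) (hw_sum : ∀ l, ∑ i, w l i = 1)
    (hmem : ∀ l i, 0 < w l i → (f l, b l i) ∈ S) :
    ∑ l, inner ℝ (∑ i, w l i • b l i) (f (l + 1) - f l) ≤ 0 := by
  simp_rw [sum_inner, real_inner_smul_left]
  rw [sum_sum_mul_eq_sum_pi_prod_mul_sum _ _ hw_sum]
  refine sum_nonpos fun g _ => ?_
  have hprod_nonneg : 0 ≤ ∏ l, w l (g l) := prod_nonneg fun l _ => hw_nonneg l (g l)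
  rcases hprod_nonneg.eq_or_lt with hzero | hpos
  · rw [← hzero, zero_mul]
  · have hw_pos : ∀ l, 0 < w l (g l) := fun l =>
      (hw_nonneg l (g l)).lt_of_ne fun h => hpos.ne' (prod_eq_zero (mem_univ l) h.symm)
    exact mul_nonpos_of_nonneg_of_nonpos hprod_nonneg
      (hS k f (fun l => b l (g l)) fun l => hmem l (g l) (hw_pos l))

theorem cyclically_monotone_of_barycentric_projection
    (N M : ℕ) (hM : 0 < M)
    (x : Fin M → EuclideanSpace ℝ (Fin N))
    (t : Fin M → Fin M → ℝ)
    (ht_nonneg : ∀ i j, 0 ≤ t i j)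
    (ht_col : ∀ j, ∑ i, t i j = 1 / M)
    (hS : CyclicallyMonotone {p | ∃ i j, 0 < t i j ∧ p = (x j, x i)})
    (xbar : Fin M → EuclideanSpace ℝ (Fin N))
    (hxbar : ∀ j, xbar j = ∑ i, ((M : ℝ) * t i j) • x i) :
    CyclicallyMonotone {p | ∃ j, p = (x j, xbar j)} := by
  intro k f a hmem
  choose j hj using hmem
  have hM' : (0 : ℝ) < M := Nat.cast_pos.mpr hM
  have hf : f = fun l => x (j l) := funext fun l => congrArg Prod.fst (hj l)
  have ha : ∀ l, a l = ∑ i, ((M : ℝ) * t i (j l)) • x i := fun l =>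
    (congrArg Prod.snd (hj l)).trans (hxbar (j l))
  simp_rw [ha, hf]
  refine hS.sum_inner_convex_combination_nonpos (fun l => x (j l)) (fun _ => x)
    (fun l i => (M : ℝ) * t i (j l)) (fun l i => mul_nonneg hM'.le (ht_nonneg i (j l)))
    (fun l => ?_)
    fun l i hpos => ⟨i, j l, pos_of_mul_pos_right hpos hM'.le, rfl⟩
  rw [← mul_sum, ht_col, mul_one_div_cancel hM'.ne']
end

section
/- Let x_1, ..., x_M be points in ℝ^N, let p, q ∈ ℝ^M be probability vectors, and let T* be a coupling of p and q that minimizes the expected squared Euclidean distance Σ_{i,j} t_ij ‖x_i − x_j‖² over all couplings of p and q. Then the support set S = {(x_j, x_i) ∈ ℝ^N × ℝ^N : t*_ij > 0} is cyclically monotone. -/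
open Finset

/-- `T` is a coupling of the probability vectors `p` and `q`: nonnegative entries,
column sums equal to `p` and row sums equal to `q`. -/
def IsCoupling {M : ℕ} (T : Fin M → Fin M → ℝ) (p q : Fin M → ℝ) : Prop :=
  (∀ i j, 0 ≤ T i j) ∧ (∀ j, ∑ i, T i j = p j) ∧ (∀ i, ∑ j, T i j = q i)

/-!
Suppose the support of an optimal coupling `T` contains cells `(i l, j l)`, `l ∈ ℤ/(k+1)`.
Moving a small mass `ε` from every cell `(i l, j l)` to `(i l, j (l+1))` keeps `T` nonnegative
and leaves all row and column sums unchanged, so optimality forces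
`∑ l, c (i l) (j l) ≤ ∑ l, c (i l) (j (l+1))`. For the cost `c u v = ‖x u - x v‖²`,
expanding the squares and telescoping `∑ l, ‖x (j (l+1))‖² - ‖x (j l)‖²` turns this into
`∑ l, ⟪x (i l), x (j (l+1)) - x (j l)⟫ ≤ 0`.
-/

open Filter Topology

section CyclicTransfer

variable {ι α β : Type*} [Fintype ι] [DecidableEq α] [DecidableEq β]
  (σ : Equiv.Perm ι) (i : ι → α) (j : ι → β)

def cyclicTransfer (u : α) (v : β) : ℝ :=
  ∑ l, ((if u = i l ∧ v = j (σ l) then 1 else 0) - if u = i l ∧ v = j l then 1 else 0)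

theorem sum_cyclicTransfer_right [Fintype β] (u : α) : ∑ v, cyclicTransfer σ i j u v = 0 := by
  simp [cyclicTransfer, sum_comm (γ := β), ite_and]

theorem sum_cyclicTransfer_left [Fintype α] (v : β) : ∑ u, cyclicTransfer σ i j u v = 0 := by
  simp [cyclicTransfer, sum_comm (γ := α), ite_and,
    Equiv.sum_comp σ fun l => if v = j l then (1 : ℝ) else 0]

theorem sum_cyclicTransfer_mul [Fintype α] [Fintype β] (c : α → β → ℝ) :
    ∑ u, ∑ v, cyclicTransfer σ i j u v * c u v =
      ∑ l, (c (i l) (j (σ l)) - c (i l) (j l)) := by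
  simp only [cyclicTransfer, sum_mul]
  rw [sum_congr rfl fun _ _ => sum_comm, sum_comm]
  simp [sub_mul, sum_sub_distrib, ite_and]

theorem neg_card_le_cyclicTransfer (u : α) (v : β) :
    -(Fintype.card ι : ℝ) ≤ cyclicTransfer σ i j u v := by
  calc -(Fintype.card ι : ℝ) = ∑ _l : ι, (-1 : ℝ) := by simp
    _ ≤ cyclicTransfer σ i j u v := sum_le_sum fun l _ => by split_ifs <;> norm_num

theorem cyclicTransfer_nonneg {u : α} {v : β} (huv : ∀ l, ¬(u = i l ∧ v = j l)) :
    0 ≤ cyclicTransfer σ i j u v :=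
  sum_nonneg fun l _ => by rw [if_neg (huv l), sub_zero]; positivity

end CyclicTransfer

theorem IsCoupling.add_smul_cyclicTransfer {ι : Type*} [Fintype ι] {M : ℕ}
    {T : Fin M → Fin M → ℝ} {p q : Fin M → ℝ} (hT : IsCoupling T p q)
    (σ : Equiv.Perm ι) (i j : ι → Fin M) {ε : ℝ} (hε : 0 ≤ ε)
    (hεT : ∀ l, ε * Fintype.card ι ≤ T (i l) (j l)) :
    IsCoupling (fun u v => T u v + ε * cyclicTransfer σ i j u v) p q := by
  obtain ⟨hT_nonneg, hT_col, hT_row⟩ := hT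
  refine ⟨fun u v => ?_, fun v => ?_, fun u => ?_⟩
  · by_cases huv : ∃ l, u = i l ∧ v = j l
    · obtain ⟨l, rfl, rfl⟩ := huv
      have := mul_le_mul_of_nonneg_left (neg_card_le_cyclicTransfer σ i j (i l) (j l)) hε
      linarith [hεT l]
    · have := cyclicTransfer_nonneg σ i j fun l h => huv ⟨l, h⟩
      exact add_nonneg (hT_nonneg u v) (mul_nonneg hε this)
  · rw [sum_add_distrib, ← mul_sum, sum_cyclicTransfer_left, hT_col, mul_zero, add_zero]
  · rw [sum_add_distrib, ← mul_sum, sum_cyclicTransfer_right, hT_row, mul_zero, add_zero]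

theorem IsCoupling.sum_cost_le_sum_cost_perm {ι : Type*} [Fintype ι] {M : ℕ}
    {T : Fin M → Fin M → ℝ} {p q : Fin M → ℝ} (c : Fin M → Fin M → ℝ)
    (hT : IsCoupling T p q) (hmin : ∀ T' : Fin M → Fin M → ℝ, IsCoupling T' p q →
      ∑ u, ∑ v, T u v * c u v ≤ ∑ u, ∑ v, T' u v * c u v)
    (σ : Equiv.Perm ι) (i j : ι → Fin M) (hpos : ∀ l, 0 < T (i l) (j l)) :
    ∑ l, c (i l) (j l) ≤ ∑ l, c (i l) (j (σ l)) := by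
  have hsmall : ∀ᶠ ε in 𝓝 (0 : ℝ), ∀ l, ε * Fintype.card ι ≤ T (i l) (j l) :=
    eventually_all.2 fun l =>
      ((tendsto_id.mul_const _).eventually_lt_const (by simpa using hpos l)).mono fun _ => le_of_lt
  obtain ⟨ε, hεT, hε⟩ := ((hsmall.filter_mono nhdsWithin_le_nhds).and
    (self_mem_nhdsWithin : ∀ᶠ ε in 𝓝[>] (0 : ℝ), 0 < ε)).exists
  have hcost := hmin _ (hT.add_smul_cyclicTransfer σ i j hε.le hεT)
  simp only [add_mul, sum_add_distrib, mul_assoc, ← mul_sum, sum_cyclicTransfer_mul,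
    le_add_iff_nonneg_right, sum_sub_distrib] at hcost
  exact sub_nonneg.1 (nonneg_of_mul_nonneg_right hcost hε)

theorem sum_inner_sub_nonpos_of_sum_norm_sub_sq_le {E : Type*} [NormedAddCommGroup E]
    [InnerProductSpace ℝ E] {ι : Type*} [Fintype ι] (σ : Equiv.Perm ι) (f a : ι → E)
    (h : ∑ l, ‖a l - f l‖ ^ 2 ≤ ∑ l, ‖a l - f (σ l)‖ ^ 2) :
    ∑ l, inner ℝ (a l) (f (σ l) - f l) ≤ 0 := by
  have hpolar : ∀ l, 2 * inner ℝ (a l) (f (σ l) - f l) =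
      (‖f (σ l)‖ ^ 2 - ‖f l‖ ^ 2) + (‖a l - f l‖ ^ 2 - ‖a l - f (σ l)‖ ^ 2) := by
    intro l
    rw [inner_sub_right, norm_sub_sq_real, norm_sub_sq_real]
    ring
  have hsum : 2 * ∑ l, inner ℝ (a l) (f (σ l) - f l) =
      ∑ l, ‖a l - f l‖ ^ 2 - ∑ l, ‖a l - f (σ l)‖ ^ 2 := by
    rw [mul_sum, sum_congr rfl fun l _ => hpolar l, sum_add_distrib, sum_sub_distrib,
      sum_sub_distrib, Equiv.sum_comp σ fun l => ‖f l‖ ^ 2, sub_self, zero_add]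
  linarith

theorem support_of_optimal_coupling_cyclically_monotone_general
    (N M : ℕ)
    (x : Fin M → EuclideanSpace ℝ (Fin N))
    (p q : Fin M → ℝ)
    (Tstar : Fin M → Fin M → ℝ)
    (hTstar : IsCoupling Tstar p q)
    (hmin : ∀ T : Fin M → Fin M → ℝ, IsCoupling T p q →
      ∑ i, ∑ j, Tstar i j * ‖x i - x j‖ ^ 2 ≤ ∑ i, ∑ j, T i j * ‖x i - x j‖ ^ 2) :
    CyclicallyMonotone {s | ∃ i j, 0 < Tstar i j ∧ s = (x j, x i)} := by
  intro k f a hS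
  choose i j hpos hfa using hS
  obtain rfl : f = fun l => x (j l) := funext fun l => congrArg Prod.fst (hfa l)
  obtain rfl : a = fun l => x (i l) := funext fun l => congrArg Prod.snd (hfa l)
  exact sum_inner_sub_nonpos_of_sum_norm_sub_sq_le (Equiv.addRight 1) _ _ <|
    hTstar.sum_cost_le_sum_cost_perm (fun u v => ‖x u - x v‖ ^ 2) hmin
      (Equiv.addRight 1) i j hpos

theorem support_of_optimal_coupling_cyclically_monotone
    (N M : ℕ) (hM : 0 < M)
    (x : Fin M → EuclideanSpace ℝ (Fin N))
    (p q : Fin M → ℝ)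
    (hp_nonneg : ∀ j, 0 ≤ p j) (hp_sum : ∑ j, p j = 1)
    (hq_nonneg : ∀ i, 0 ≤ q i) (hq_sum : ∑ i, q i = 1)
    (Tstar : Fin M → Fin M → ℝ)
    (hTstar : IsCoupling Tstar p q)
    (hmin : ∀ T : Fin M → Fin M → ℝ, IsCoupling T p q →
      ∑ i, ∑ j, Tstar i j * ‖x i - x j‖ ^ 2 ≤ ∑ i, ∑ j, T i j * ‖x i - x j‖ ^ 2) :
    CyclicallyMonotone {s | ∃ i j, 0 < Tstar i j ∧ s = (x j, x i)} :=
  support_of_optimal_coupling_cyclically_monotone_general N M x p q Tstar hTstar hmin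
end

section
/- Let (Ω, 𝔉, ℙ) be a probability space and let X_1, X_2, ... be independent identically distributed random variables with values in ℝ^N and common law μ. Let L : ℝ^N → [0, ∞) be measurable with 0 < ∫ L dμ < ∞, and let g : ℝ^N → ℝ be measurable with ∫ |g| L dμ < ∞. Then the self-normalized importance sampling estimator converges almost surely: (Σ_{i=1}^M L(X_i) g(X_i)) / (Σ_{i=1}^M L(X_i)) → (∫ g L dμ) / (∫ L dμ) as M → ∞, almost surely on the event where the denominator is eventually positive (which has probability 1). -/
open MeasureTheory ProbabilityTheory Filter Finset Topology Function

/-! Divided by `M`, numerator and denominator are empirical means of the i.i.d. integrable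
variables `L (X i) * g (X i)` and `L (X i)`, so by the strong law of large numbers they converge
almost surely to `∫ g L dμ` and `∫ L dμ ≠ 0`; the ratio of the means is the estimator. -/

theorem strong_law_ae_comp {Ω E : Type*} [MeasurableSpace Ω] [MeasurableSpace E]
    {P : Measure Ω} {μ : Measure E} {X : ℕ → Ω → E} (hX : ∀ i, AEMeasurable (X i) P)
    (hindep : Pairwise ((· ⟂ᵢ[P] ·) on X)) (hlaw : ∀ i, P.map (X i) = μ)
    {f : E → ℝ} (hf : Measurable f) (hf_int : Integrable f μ) :
    ∀ᵐ ω ∂P, Tendsto (fun n : ℕ => (∑ i ∈ range n, f (X i ω)) / n) atTop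
      (𝓝 (∫ x, f x ∂μ)) := by
  have hident : ∀ i, IdentDistrib (X i) (X 0) P P := fun i =>
    ⟨hX i, hX 0, by rw [hlaw, hlaw]⟩
  have hint : Integrable (f ∘ X 0) P := by
    rw [← hlaw 0] at hf_int
    exact hf_int.comp_aemeasurable (hX 0)
  have := strong_law_ae_real (fun i => f ∘ X i) hint
    (fun i j hij => (hindep hij).comp hf hf) (fun i => (hident i).comp hf)
  rwa [← hlaw 0, integral_map (hX 0) hf.aestronglyMeasurable]

theorem tendsto_div_of_tendsto_div_natCast {a b : ℕ → ℝ} {A B : ℝ}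
    (ha : Tendsto (fun n : ℕ => a n / n) atTop (𝓝 A))
    (hb : Tendsto (fun n : ℕ => b n / n) atTop (𝓝 B)) (hB : B ≠ 0) :
    Tendsto (fun n => a n / b n) atTop (𝓝 (A / B)) :=
  (ha.div hb hB).congr' <| (eventually_ne_atTop 0).mono fun _ hn =>
    div_div_div_cancel_right₀ (Nat.cast_ne_zero.2 hn) _ _

theorem importance_sampling_estimator_converges_general
    {Ω : Type*} [MeasurableSpace Ω] (P : Measure Ω)
    (N : ℕ)
    (X : ℕ → Ω → EuclideanSpace ℝ (Fin N))
    (hXmeas : ∀ i, Measurable (X i))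
    (hXindep : iIndepFun X P)
    (μ : Measure (EuclideanSpace ℝ (Fin N)))
    (hXlaw : ∀ i, Measure.map (X i) P = μ)
    (L : EuclideanSpace ℝ (Fin N) → ℝ)
    (hL_nonneg : ∀ x, 0 ≤ L x)
    (hL_meas : Measurable L)
    (hL_int : Integrable L μ)
    (hL_pos : 0 < ∫ x, L x ∂μ)
    (g : EuclideanSpace ℝ (Fin N) → ℝ)
    (hg_meas : Measurable g)
    (hgL_int : Integrable (fun x => |g x| * L x) μ) :
    ∀ᵐ ω ∂P, Tendsto
      (fun M : ℕ =>
        (∑ i ∈ Finset.range M, L (X i ω) * g (X i ω)) /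
          (∑ i ∈ Finset.range M, L (X i ω)))
      atTop (nhds ((∫ x, g x * L x ∂μ) / (∫ x, L x ∂μ))) := by
  have hLg_meas : Measurable fun x => L x * g x := hL_meas.mul hg_meas
  have hLg_int : Integrable (fun x => L x * g x) μ :=
    hgL_int.mono' hLg_meas.aestronglyMeasurable <| ae_of_all _ fun x => le_of_eq <| by
      rw [Real.norm_eq_abs, abs_mul, abs_of_nonneg (hL_nonneg x), mul_comm]
  have hX : ∀ i, AEMeasurable (X i) P := fun i => (hXmeas i).aemeasurable
  have hpair : Pairwise ((· ⟂ᵢ[P] ·) on X) := fun _ _ hij => hXindep.indepFun hij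
  filter_upwards [strong_law_ae_comp hX hpair hXlaw hLg_meas hLg_int,
    strong_law_ae_comp hX hpair hXlaw hL_meas hL_int] with ω hLg hL
  simpa only [mul_comm (g _)] using tendsto_div_of_tendsto_div_natCast hLg hL hL_pos.ne'

theorem importance_sampling_estimator_converges
    {Ω : Type*} [MeasurableSpace Ω] (P : Measure Ω) [IsProbabilityMeasure P]
    (N : ℕ)
    (X : ℕ → Ω → EuclideanSpace ℝ (Fin N))
    (hXmeas : ∀ i, Measurable (X i))
    (hXindep : iIndepFun X P)
    (μ : Measure (EuclideanSpace ℝ (Fin N))) [IsProbabilityMeasure μ]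
    (hXlaw : ∀ i, Measure.map (X i) P = μ)
    (L : EuclideanSpace ℝ (Fin N) → ℝ)
    (hL_nonneg : ∀ x, 0 ≤ L x)
    (hL_meas : Measurable L)
    (hL_int : Integrable L μ)
    (hL_pos : 0 < ∫ x, L x ∂μ)
    (g : EuclideanSpace ℝ (Fin N) → ℝ)
    (hg_meas : Measurable g)
    (hgL_int : Integrable (fun x => |g x| * L x) μ) :
    ∀ᵐ ω ∂P, Tendsto
      (fun M : ℕ =>
        (∑ i ∈ Finset.range M, L (X i ω) * g (X i ω)) /
          (∑ i ∈ Finset.range M, L (X i ω)))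
      atTop (nhds ((∫ x, g x * L x ∂μ) / (∫ x, L x ∂μ))) :=
  importance_sampling_estimator_converges_general P N X hXmeas hXindep μ hXlaw L hL_nonneg hL_meas
    hL_int hL_pos g hg_meas hgL_int
end
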